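/- Let y, w ∈ W_n. (i) If y and w are connected by a finite sequence of Knuth relations of types I_n and II_n, then rep_J(y) = rep_J(w). (ii) If y and w are connected by a finite sequence of Knuth relations of types I_{n−1}, II_{n−1} and III_{n−1}, then rep_K(y) = rep_K(w). -/

import Mathlib

namespace BnPaper

/-- The generator `t`: swaps `1` and `-1`, fixing all other points. -/
def t : Equiv.Perm ℤ := Equiv.swap 1 (-1)

/-- The generator `s i`: swaps `i ↔ i+1` and `-i ↔ -(i+1)`. -/
def s (i : ℤ) : Equiv.Perm ℤ := Equiv.swap i (i + 1) * Equiv.swap (-i) (-(i + 1))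

/-- The descending product `s_j · s_{j-1} ⋯ s_i` (the identity when `i > j`). -/
def desc (i j : ℕ) : Equiv.Perm ℤ :=
  ((List.range (j + 1 - i)).map (fun k => s ((j : ℤ) - (k : ℤ)))).prod

/-- The ascending product `s_i · s_{i+1} ⋯ s_j` (the identity when `i > j`). -/
def asc (i j : ℕ) : Equiv.Perm ℤ :=
  ((List.range (j + 1 - i)).map (fun k => s ((i : ℤ) + (k : ℤ)))).prod

/-- `t_j = s_{j-1} ⋯ s_1 · t · s_1 ⋯ s_{j-1}`. -/
def tt (j : ℕ) : Equiv.Perm ℤ := desc 1 (j - 1) * t * (desc 1 (j - 1))⁻¹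

/-- The Coxeter generating set `{t, s_1, …, s_{n-1}}` of `W_n`. -/
def gens (n : ℕ) : Set (Equiv.Perm ℤ) :=
  insert t {g | ∃ i : ℕ, 1 ≤ i ∧ i ≤ n - 1 ∧ g = s (i : ℤ)}

/-- The Coxeter length: the least number of generators whose product is `w`. -/
noncomputable def len (n : ℕ) (w : Equiv.Perm ℤ) : ℕ :=
  sInf {k | ∃ l : List (Equiv.Perm ℤ), l.length = k ∧ (∀ g ∈ l, g ∈ gens n) ∧ l.prod = w}

/-- `W_n` realised as the signed permutations of `{-n, …, -1, 1, …, n}`: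
permutations of `ℤ` that are odd (`w(-i) = -w(i)`) and fix everything beyond `n` in
absolute value. -/
def W (n : ℕ) : Set (Equiv.Perm ℤ) :=
  {w | (∀ i : ℤ, w (-i) = -(w i)) ∧ ∀ i : ℤ, (n : ℤ) < |i| → w i = i}

/-- The right descent set `Des(w)`. -/
def Des (n : ℕ) (w : Equiv.Perm ℤ) : Set (Equiv.Perm ℤ) :=
  {g | g ∈ gens n ∧ len n (w * g) < len n w}

/-- The enhanced descent-set invariant
`ρ_m(w) = Des(w) ∪ {t_j : 2 ≤ j ≤ m, ℓ(w t_j) < ℓ(w)}`. -/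
def rho (n m : ℕ) (w : Equiv.Perm ℤ) : Set (Equiv.Perm ℤ) :=
  Des n w ∪ {g | ∃ j : ℕ, 2 ≤ j ∧ j ≤ m ∧ g = tt j ∧ len n (w * tt j) < len n w}

/-- `Área_n`: the negative entries of the row form appear in increasing order and
the positive entries in strictly decreasing order. -/
def Area (n : ℕ) : Set (Equiv.Perm ℤ) :=
  {w | w ∈ W n ∧ ∀ i j : ℤ, 1 ≤ i → i < j → j ≤ (n : ℤ) →
    (w i < 0 → w j < 0 → w i < w j) ∧ (0 < w i → 0 < w j → w j < w i)}

/-- The suffix relation `y ≤_e w`: `w = z · y` with `ℓ(w) = ℓ(z) + ℓ(y)`. -/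
def Suf (n : ℕ) (y w : Equiv.Perm ℤ) : Prop :=
  ∃ z, z ∈ W n ∧ w = z * y ∧ len n w = len n z + len n y

/-- `a_q = (t)(s_1 t)(s_2 s_1 t) ⋯ (s_{q-1} ⋯ s_1 t)`. -/
def aw (q : ℕ) : Equiv.Perm ℤ := ((List.range q).map (fun k => desc 1 k * t)).prod

/-- `b_q = (s_{q+1})(s_{q+2} s_{q+1}) ⋯ (s_{n-1} ⋯ s_{q+1})` (identity for `q ≥ n-1`). -/
def bw (n q : ℕ) : Equiv.Perm ℤ :=
  ((List.range (n - 1 - q)).map (fun k => desc (q + 1) (q + 1 + k))).prod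

/-- `σ_{n,q} = a_q · b_q`. -/
def sig (n q : ℕ) : Equiv.Perm ℤ := aw q * bw n q

/-- `p_{n,q} = (s_{n-q} ⋯ s_1)(s_{n-q+1} ⋯ s_2) ⋯ (s_{n-1} ⋯ s_q)`,
with `p_{n,0} = p_{n,n} = e`. -/
def p (n q : ℕ) : Equiv.Perm ℤ :=
  ((List.range q).map (fun m => desc (1 + m) (n - q + m))).prod

/-- `Π_{n,q} = (s_{n-q-1} ⋯ s_1) · t · p_{n,q}`. -/
def PiElt (n q : ℕ) : Equiv.Perm ℤ := desc 1 (n - q - 1) * t * p n q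

/-- `Υ(w) = {z ∈ Área_n : Des(z) = Des(w)}`. -/
def Ups (n : ℕ) (w : Equiv.Perm ℤ) : Set (Equiv.Perm ℤ) :=
  {z | z ∈ Area n ∧ Des n z = Des n w}

/-- The parabolic subgroup `W_J = ⟨s_1, …, s_{n-1}⟩`. -/
def WJ (n : ℕ) : Set (Equiv.Perm ℤ) :=
  ↑(Subgroup.closure {g | ∃ i : ℕ, 1 ≤ i ∧ i ≤ n - 1 ∧ g = s (i : ℤ)})

/-- The parabolic subgroup `W_K = ⟨t, s_1, …, s_{n-2}⟩`. -/
def WK (n : ℕ) : Set (Equiv.Perm ℤ) :=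
  ↑(Subgroup.closure (insert t {g | ∃ i : ℕ, 1 ≤ i ∧ i ≤ n - 2 ∧ g = s (i : ℤ)}))

/-- Knuth relation of type `I_k` : `w' = w · s_{i+1}` when
`w(i+1) < w(i) < w(i+2)` or `w(i+2) < w(i) < w(i+1)`. -/
def stepI (k : ℕ) (w w' : Equiv.Perm ℤ) : Prop :=
  ∃ i : ℤ, 1 ≤ i ∧ i ≤ (k : ℤ) - 2 ∧
    ((w (i + 1) < w i ∧ w i < w (i + 2)) ∨ (w (i + 2) < w i ∧ w i < w (i + 1))) ∧
    w' = w * s (i + 1)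

/-- Knuth relation of type `II_k` : `w' = w · s_i` when
`w(i+1) < w(i+2) < w(i)` or `w(i) < w(i+2) < w(i+1)`. -/
def stepII (k : ℕ) (w w' : Equiv.Perm ℤ) : Prop :=
  ∃ i : ℤ, 1 ≤ i ∧ i ≤ (k : ℤ) - 2 ∧
    ((w (i + 1) < w (i + 2) ∧ w (i + 2) < w i) ∨ (w i < w (i + 2) ∧ w (i + 2) < w (i + 1))) ∧
    w' = w * s i

/-- Knuth relation of type `III_k` : `w' = w · s_i` when `w(i)` and `w(i+1)` have
opposite signs. -/
def stepIII (k : ℕ) (w w' : Equiv.Perm ℤ) : Prop :=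
  ∃ i : ℤ, 1 ≤ i ∧ i ≤ (k : ℤ) - 1 ∧
    ((w i < 0 ∧ 0 < w (i + 1)) ∨ (w (i + 1) < 0 ∧ 0 < w i)) ∧
    w' = w * s i

/-!
The Knuth relations in (i) (resp. (ii)) multiply on the right by generators of `W_J`
(resp. `W_K`), so `y` and `w` lie in one left coset of the parabolic subgroup and their minimal
representatives satisfy `x' = x v` with `v` in that subgroup. Since the length of a signed
permutation is the type-`B` inversion statistic, a minimal representative has no descent at a
generator of the subgroup: `x` is increasing on `1, …, n` (resp. positive and increasing on
`1, …, n-1`). Then `v` permutes `{1, …, n}` (resp. `{1, …, n-1}`) and both `x` and `x v` are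
increasing there, which forces `v = 1`.
-/

open Equiv Set

lemma eqOn_id_of_strictMonoOn_of_mapsTo {N : ℤ} {v : ℤ → ℤ} (hv : StrictMonoOn v (Icc 1 N))
    (hmaps : MapsTo v (Icc 1 N) (Icc 1 N)) : EqOn v id (Icc 1 N) := by
  -- `v` climbs by at least one at each step, so `v i - i` increases from `≥ 0` to `≤ 0`
  have hmono : MonotoneOn (fun i => v i - i) (Icc 1 N) :=
    monotoneOn_of_le_add_one ordConnected_Icc fun a _ ha ha1 => by
      have := hv ha ha1 (lt_add_one a); omega
  intro i hi
  have hN : 1 ≤ N := hi.1.trans hi.2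
  have h1 := hmono ⟨le_rfl, hN⟩ hi hi.1
  have h2 := hmono hi ⟨hN, le_rfl⟩ hi.2
  have h3 := (hmaps ⟨le_rfl, hN⟩).1
  have h4 := (hmaps ⟨hN, le_rfl⟩).2
  dsimp only at h1 h2
  exact show v i = i by omega

lemma strictMonoOn_of_comp {α β γ : Type*} [LinearOrder α] [LinearOrder β]
    [Preorder γ] {f : β → γ} {g : α → β} {s : Set α} {t : Set β} (hf : StrictMonoOn f t)
    (hfg : StrictMonoOn (f ∘ g) s) (hg : MapsTo g s t) : StrictMonoOn g s :=
  fun _ ha _ hb hab => (hf.lt_iff_lt (hg ha) (hg hb)).1 (hfg ha hb hab)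

lemma pos_of_strictMonoOn {N : ℤ} {v : ℤ → ℤ} (hv : StrictMonoOn v (Icc 1 N)) (h1 : 0 < v 1)
    {i : ℤ} (hi : i ∈ Icc 1 N) : 0 < v i :=
  h1.trans_le (hv.monotoneOn ⟨le_rfl, hi.1.trans hi.2⟩ hi hi.1)

lemma s_apply {i : ℤ} (hi : 1 ≤ i) (k : ℤ) :
    s i k = if k = i then i + 1 else if k = i + 1 then i
      else if k = -i then -(i + 1) else if k = -(i + 1) then -i else k := by
  simp only [s, Perm.mul_apply, swap_apply_def]
  split_ifs <;> omega

lemma s_apply_of_pos {i k : ℤ} (hi : 1 ≤ i) (hk : 1 ≤ k) :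
    s i k = if k = i then i + 1 else if k = i + 1 then i else k := by
  rw [s_apply hi]; split_ifs <;> omega

lemma t_apply (k : ℤ) : t k = if k = 1 then -1 else if k = -1 then 1 else k := by
  simp only [t, swap_apply_def]

lemma s_mul_self {i : ℤ} (hi : 1 ≤ i) : s i * s i = 1 := by
  ext k; simp only [Perm.mul_apply, s_apply hi, Perm.one_apply]; split_ifs <;> omega

lemma t_mul_self : t * t = 1 := swap_mul_self _ _

lemma one_mem_W (n : ℕ) : (1 : Perm ℤ) ∈ W n := ⟨fun _ => rfl, fun _ _ => rfl⟩

lemma mul_mem_W {n : ℕ} {a b : Perm ℤ} (ha : a ∈ W n) (hb : b ∈ W n) : a * b ∈ W n :=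
  ⟨fun i => by simp only [Perm.mul_apply, hb.1, ha.1],
    fun i hi => by rw [Perm.mul_apply, hb.2 i hi, ha.2 i hi]⟩

lemma inv_mem_W {n : ℕ} {a : Perm ℤ} (ha : a ∈ W n) : a⁻¹ ∈ W n := by
  refine ⟨fun i => ?_, fun i hi => Perm.inv_eq_iff_eq.2 (ha.2 i hi).symm⟩
  rw [Perm.inv_eq_iff_eq, ha.1]; simp

lemma t_mem_W {n : ℕ} (hn : 1 ≤ n) : t ∈ W n := by
  refine ⟨fun i => ?_, fun i hi => ?_⟩ <;> simp only [t_apply] <;> split_ifs <;>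
    first | omega | (rcases abs_cases i with h | h <;> omega)

lemma s_mem_W {n : ℕ} {i : ℤ} (hi : 1 ≤ i) (hin : i ≤ n - 1) : s i ∈ W n := by
  refine ⟨fun k => ?_, fun k hk => ?_⟩ <;> simp only [s_apply hi] <;> split_ifs <;>
    first | omega | (rcases abs_cases k with h | h <;> omega)

lemma gens_subset_W {n : ℕ} (hn : 1 ≤ n) : gens n ⊆ W n := by
  rintro g (rfl | ⟨i, hi1, hi2, rfl⟩)
  · exact t_mem_W hn
  · exact s_mem_W (by exact_mod_cast hi1) (by omega)

lemma list_prod_mem_W {n : ℕ} (hn : 1 ≤ n) {l : List (Perm ℤ)} (hl : ∀ g ∈ l, g ∈ gens n) :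
    l.prod ∈ W n := by
  induction l with
  | nil => exact one_mem_W n
  | cons g l ih =>
    simp only [List.mem_cons, forall_eq_or_imp] at hl
    exact mul_mem_W (gens_subset_W hn hl.1) (ih hl.2)

lemma apply_zero_of_mem_W {n : ℕ} {w : Perm ℤ} (hw : w ∈ W n) : w 0 = 0 := by
  have := hw.1 0; simp only [neg_zero] at this; omega

lemma apply_ne_zero_of_mem_W {n : ℕ} {w : Perm ℤ} (hw : w ∈ W n) {i : ℤ} (hi : i ≠ 0) :
    w i ≠ 0 :=
  fun h => hi (w.injective (h.trans (apply_zero_of_mem_W hw).symm))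

lemma abs_apply_mem_Icc_of_mem_W {n : ℕ} {w : Perm ℤ} (hw : w ∈ W n) {i : ℤ}
    (hi : i ∈ Icc 1 (n : ℤ)) : |w i| ∈ Icc 1 (n : ℤ) := by
  have h0 := apply_ne_zero_of_mem_W hw (i := i) (by linarith [hi.1])
  refine ⟨by rcases abs_cases (w i) with h | h <;> omega, not_lt.1 fun h => ?_⟩
  have : w i = i := w.injective (hw.2 _ h)
  rw [this, abs_of_pos (by linarith [hi.1])] at h
  exact absurd hi.2 (not_le.2 h)

lemma eq_one_of_eqOn_of_mem_W {n : ℕ} {w : Perm ℤ} (hw : w ∈ W n)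
    (h : EqOn w id (Icc 1 (n : ℤ))) : w = 1 := by
  ext k
  rcases lt_trichotomy k 0 with hk | rfl | hk
  · by_cases hkn : (n : ℤ) < |k|
    · exact hw.2 k hkn
    · have := h (show -k ∈ Icc 1 (n : ℤ) from ⟨by omega, by rw [abs_of_neg hk] at hkn; omega⟩)
      have hodd := hw.1 (-k)
      simp only [neg_neg, id] at this hodd
      simp only [Perm.one_apply]; omega
  · exact apply_zero_of_mem_W hw
  · by_cases hkn : (n : ℤ) < |k|
    · exact hw.2 k hkn
    · exact h ⟨hk, by rw [abs_of_pos hk] at hkn; omega⟩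

lemma mapsTo_Icc_of_mem_W {n : ℕ} {w : Perm ℤ} (hw : w ∈ W n)
    (hpos : ∀ i ∈ Icc 1 (n : ℤ), 0 < w i) : MapsTo w (Icc 1 n) (Icc 1 n) := fun i hi => by
  have := abs_apply_mem_Icc_of_mem_W hw hi
  rwa [abs_of_pos (hpos i hi)] at this

noncomputable def pairs (n : ℕ) : Finset (ℤ × ℤ) := Finset.Icc 1 (n : ℤ) ×ˢ Finset.Icc 1 (n : ℤ)

def pairWeight (w : Perm ℤ) (p : ℤ × ℤ) : ℕ :=
  (if p.1 < p.2 ∧ w p.2 < w p.1 then 1 else 0) + (if p.1 ≤ p.2 ∧ w p.1 + w p.2 < 0 then 1 else 0)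

/-- The inversion statistic `inv(w(1), …, w(n)) + #{i ≤ j : w(i) + w(j) < 0}`, which is the
Coxeter length of `w` in type `B` (Björner–Brenti, Prop. 8.1.1). -/
noncomputable def invB (n : ℕ) (w : Perm ℤ) : ℕ := ∑ p ∈ pairs n, pairWeight w p

lemma invB_one (n : ℕ) : invB n 1 = 0 :=
  Finset.sum_eq_zero fun p hp => by
    simp only [pairs, Finset.mem_product, Finset.mem_Icc] at hp
    unfold pairWeight; split_ifs <;> simp only [Perm.one_apply] at * <;> omega

lemma s_apply_lt_s_apply_iff {i a b : ℤ} (hi : 1 ≤ i) (ha : 1 ≤ a) (hb : 1 ≤ b)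
    (hab : (a, b) ≠ (i, i + 1)) (hba : (a, b) ≠ (i + 1, i)) : s i a < s i b ↔ a < b := by
  simp only [ne_eq, Prod.mk.injEq] at hab hba
  rw [s_apply_of_pos hi ha, s_apply_of_pos hi hb]
  split_ifs <;> omega

lemma pairWeight_mul_s {w : Perm ℤ} {i a b : ℤ} (hi : 1 ≤ i) (ha : 1 ≤ a) (hb : 1 ≤ b)
    (hab : (a, b) ≠ (i, i + 1)) (hba : (a, b) ≠ (i + 1, i)) :
    pairWeight (w * s i) (s i a, s i b) = pairWeight w (a, b) := by
  have hlt := s_apply_lt_s_apply_iff hi ha hb hab hba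
  have hgt := s_apply_lt_s_apply_iff hi hb ha (by grind) (by grind)
  simp only [pairWeight, Perm.mul_apply, ← Perm.mul_apply (s i), s_mul_self hi, Perm.one_apply,
    hlt, ← not_lt, hgt]

lemma pairWeight_eq_zero_of_lt (w : Perm ℤ) {a b : ℤ} (h : b < a) : pairWeight w (a, b) = 0 := by
  simp [pairWeight, h.not_gt, h.not_ge]

lemma invB_mul_s_eq_sum (n : ℕ) (w : Perm ℤ) {i : ℤ} (h1 : 1 ≤ i) (h2 : i ≤ n - 1) :
    invB n (w * s i) = ∑ p ∈ pairs n, pairWeight (w * s i) (s i p.1, s i p.2) := by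
  have hs : ∀ k, s i (s i k) = k := fun k => by rw [← Perm.mul_apply, s_mul_self h1]; rfl
  have hmaps : ∀ p ∈ pairs n, (s i p.1, s i p.2) ∈ pairs n := by
    simp only [pairs, Finset.mem_product, Finset.mem_Icc]
    intro p hp; rw [s_apply_of_pos h1 hp.1.1, s_apply_of_pos h1 hp.2.1]; split_ifs <;> omega
  exact Finset.sum_nbij' _ _ hmaps hmaps (fun p _ => by simp [hs]) (fun p _ => by simp [hs])
    (fun p _ => by simp [hs])

lemma invB_mul_s (n : ℕ) (w : Perm ℤ) {i : ℤ} (h1 : 1 ≤ i) (h2 : i ≤ n - 1) :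
    (invB n (w * s i) : ℤ) = invB n w + if w i < w (i + 1) then 1 else -1 := by
  have hmem : ∀ a b : ℤ, a = i ∨ a = i + 1 → b = i ∨ b = i + 1 → (a, b) ∈ pairs n := by
    simp only [pairs, Finset.mem_product, Finset.mem_Icc]; omega
  -- after reindexing by `s i`, only the pairs `(i, i + 1)` and `(i + 1, i)` change weight
  have hdiff : ∑ p ∈ pairs n,
      ((pairWeight (w * s i) (s i p.1, s i p.2) : ℤ) - pairWeight w p) =
      ((pairWeight (w * s i) (s i i, s i (i + 1)) : ℤ) - pairWeight w (i, i + 1)) +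
      ((pairWeight (w * s i) (s i (i + 1), s i i) : ℤ) - pairWeight w (i + 1, i)) := by
    refine Finset.sum_eq_add_of_mem (i, i + 1) (i + 1, i) (hmem _ _ (by omega) (by omega))
      (hmem _ _ (by omega) (by omega)) (by simp) fun p hp hne => ?_
    simp only [pairs, Finset.mem_product, Finset.mem_Icc] at hp
    rw [pairWeight_mul_s h1 hp.1.1 hp.2.1 hne.1 hne.2, sub_self]
  rw [Finset.sum_sub_distrib] at hdiff
  have hii : s i i = i + 1 := by rw [s_apply_of_pos h1 h1]; simp
  have hi1 : s i (i + 1) = i := by rw [s_apply_of_pos h1 (by omega)]; simp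
  have hne : w i ≠ w (i + 1) := fun h => by have := w.injective h; omega
  have e1 : (w * s i) i = w (i + 1) := by rw [Perm.mul_apply, hii]
  have e2 : (w * s i) (i + 1) = w i := by rw [Perm.mul_apply, hi1]
  rw [invB_mul_s_eq_sum n w h1 h2, invB, ← sub_eq_iff_eq_add', Nat.cast_sum, Nat.cast_sum, hdiff,
    hii, hi1, pairWeight_eq_zero_of_lt _ (lt_add_one i), pairWeight_eq_zero_of_lt _ (lt_add_one i)]
  unfold pairWeight; dsimp only
  rw [e1, e2]
  split_ifs <;> omega

lemma mul_t_apply_of_pos {n : ℕ} {w : Perm ℤ} (hw : w ∈ W n) {k : ℤ} (hk : 1 ≤ k) :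
    (w * t) k = if k = 1 then -w 1 else w k := by
  rw [Perm.mul_apply, t_apply, ← hw.1]
  split_ifs <;> first | rfl | omega

lemma invB_mul_t {n : ℕ} (hn : 1 ≤ n) {w : Perm ℤ} (hw : w ∈ W n) :
    (invB n (w * t) : ℤ) = invB n w + if 0 < w 1 then 1 else -1 := by
  have h11 : ((1, 1) : ℤ × ℤ) ∈ pairs n := by
    simp only [pairs, Finset.mem_product, Finset.mem_Icc]; omega
  have hdiff : ∑ p ∈ pairs n, ((pairWeight (w * t) p : ℤ) - pairWeight w p) =
      (pairWeight (w * t) (1, 1) : ℤ) - pairWeight w (1, 1) := by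
    refine Finset.sum_eq_single_of_mem _ h11 fun ⟨a, b⟩ hp hne => ?_
    simp only [pairs, Finset.mem_product, Finset.mem_Icc] at hp
    simp only [ne_eq, Prod.mk.injEq] at hne
    unfold pairWeight; dsimp only
    rw [mul_t_apply_of_pos hw hp.1.1, mul_t_apply_of_pos hw hp.2.1]
    split_ifs <;> subst_vars <;> omega
  have hw1 := apply_ne_zero_of_mem_W hw one_ne_zero
  rw [invB, invB, ← sub_eq_iff_eq_add', Nat.cast_sum, Nat.cast_sum, ← Finset.sum_sub_distrib,
    hdiff]
  unfold pairWeight; dsimp only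
  rw [mul_t_apply_of_pos hw le_rfl]
  split_ifs <;> omega

lemma invB_mul_gens_le {n : ℕ} (hn : 1 ≤ n) {w g : Perm ℤ} (hw : w ∈ W n) (hg : g ∈ gens n) :
    invB n (w * g) ≤ invB n w + 1 := by
  rcases hg with rfl | ⟨i, hi1, hi2, rfl⟩
  · have := invB_mul_t hn hw
    split_ifs at this <;> omega
  · have := invB_mul_s n w (i := i) (by omega) (by omega)
    split_ifs at this <;> omega

lemma invB_list_prod_le {n : ℕ} (hn : 1 ≤ n) {l : List (Perm ℤ)} (hl : ∀ g ∈ l, g ∈ gens n) :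
    invB n l.prod ≤ l.length := by
  induction l using List.reverseRecOn with
  | nil => simp [invB_one]
  | append_singleton l g ih =>
    simp only [List.mem_append, List.mem_singleton] at hl
    have hl' : ∀ g ∈ l, g ∈ gens n := fun g hg => hl g (.inl hg)
    rw [List.prod_append, List.prod_singleton, List.length_append, List.length_singleton]
    have := invB_mul_gens_le hn (list_prod_mem_W hn hl') (hl g (.inr rfl))
    have := ih hl'
    omega

lemma exists_gens_invB_mul_add_one {n : ℕ} (hn : 1 ≤ n) {w : Perm ℤ} (hw : w ∈ W n)
    (hne : w ≠ 1) : ∃ g ∈ gens n, invB n (w * g) + 1 = invB n w := by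
  by_cases hdes : ∃ i : ℤ, 1 ≤ i ∧ i ≤ n - 1 ∧ w (i + 1) < w i
  · obtain ⟨i, h1, h2, hlt⟩ := hdes
    refine ⟨s i, .inr ⟨i.toNat, by omega, by omega, by rw [Int.toNat_of_nonneg (by omega)]⟩, ?_⟩
    have := invB_mul_s n w h1 h2
    rw [if_neg (by omega)] at this
    omega
  by_cases hneg : w 1 < 0
  · refine ⟨t, .inl rfl, ?_⟩
    have := invB_mul_t hn hw
    rw [if_neg (by omega)] at this
    omega
  push Not at hdes hneg
  have hmono : StrictMonoOn w (Icc 1 n) :=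
    strictMonoOn_of_lt_add_one ordConnected_Icc fun i _ hi hi1 =>
      (hdes i hi.1 (by linarith [hi1.2])).lt_of_ne (w.injective.ne (by omega))
  have h1 : 0 < w 1 := hneg.lt_of_ne' (apply_ne_zero_of_mem_W hw one_ne_zero)
  exact absurd (eq_one_of_eqOn_of_mem_W hw (eqOn_id_of_strictMonoOn_of_mapsTo hmono
    (mapsTo_Icc_of_mem_W hw fun i hi => pos_of_strictMonoOn hmono h1 hi))) hne

lemma exists_gens_word_length_eq_invB {n : ℕ} (hn : 1 ≤ n) {w : Perm ℤ} (hw : w ∈ W n) :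
    ∃ l : List (Perm ℤ), l.length = invB n w ∧ (∀ g ∈ l, g ∈ gens n) ∧ l.prod = w := by
  induction hk : invB n w generalizing w with
  | zero =>
    refine ⟨[], rfl, by simp, ?_⟩
    by_contra hne
    obtain ⟨g, -, hg⟩ := exists_gens_invB_mul_add_one hn hw (Ne.symm hne)
    omega
  | succ k ih =>
    have hne : w ≠ 1 := by rintro rfl; rw [invB_one] at hk; omega
    obtain ⟨g, hg, hlen⟩ := exists_gens_invB_mul_add_one hn hw hne
    obtain ⟨l, hl, hgens, hprod⟩ := ih (mul_mem_W hw (gens_subset_W hn hg)) (by omega)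
    refine ⟨l ++ [g], by simp [hl], ?_, ?_⟩
    · simpa [or_imp, forall_and] using ⟨hgens, hg⟩
    · rw [List.prod_append, List.prod_singleton, hprod, mul_assoc]
      rcases hg with rfl | ⟨i, hi, -, rfl⟩
      · rw [t_mul_self, mul_one]
      · rw [s_mul_self (by omega), mul_one]

theorem len_eq_invB {n : ℕ} (hn : 1 ≤ n) {w : Perm ℤ} (hw : w ∈ W n) : len n w = invB n w := by
  obtain ⟨l, hl, hgens, hprod⟩ := exists_gens_word_length_eq_invB hn hw
  refine le_antisymm (Nat.sInf_le ⟨l, hl, hgens, hprod⟩) (le_csInf ⟨_, l, hl, hgens, hprod⟩ ?_)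
  rintro k ⟨l', rfl, hgens', rfl⟩
  exact invB_list_prod_le hn hgens'

lemma apply_lt_apply_add_one_of_len_le {n : ℕ} (hn : 1 ≤ n) {w : Perm ℤ} (hw : w ∈ W n)
    {i : ℤ} (h1 : 1 ≤ i) (h2 : i ≤ n - 1) (hlen : len n w ≤ len n (w * s i)) :
    w i < w (i + 1) := by
  rw [len_eq_invB hn hw, len_eq_invB hn (mul_mem_W hw (s_mem_W h1 h2))] at hlen
  have := invB_mul_s n w h1 h2
  split_ifs at this with h
  · exact h
  · omega

lemma apply_one_pos_of_len_le {n : ℕ} (hn : 1 ≤ n) {w : Perm ℤ} (hw : w ∈ W n)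
    (hlen : len n w ≤ len n (w * t)) : 0 < w 1 := by
  rw [len_eq_invB hn hw, len_eq_invB hn (mul_mem_W hw (t_mem_W hn))] at hlen
  have := invB_mul_t hn hw
  split_ifs at this with h
  · exact h
  · omega

def posPreservingSubgroup (n : ℕ) : Subgroup (Perm ℤ) where
  carrier := {v | v ∈ W n ∧ ∀ i, 0 < i → 0 < v i}
  one_mem' := ⟨one_mem_W n, fun _ h => h⟩
  mul_mem' ha hb := ⟨mul_mem_W ha.1 hb.1, fun i hi => ha.2 _ (hb.2 i hi)⟩
  inv_mem' {a} ha := ⟨inv_mem_W ha.1, fun i hi => by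
    have hi' : a (a⁻¹ i) = i := by simp
    by_contra hle
    rcases (not_lt.1 hle).lt_or_eq with hneg | hzero
    · have := ha.2 _ (neg_pos.2 hneg)
      rw [ha.1.1, hi'] at this
      omega
    · rw [hzero, apply_zero_of_mem_W ha.1] at hi'
      omega⟩

def fixingNSubgroup (n : ℕ) : Subgroup (Perm ℤ) where
  carrier := {v | v ∈ W n ∧ v n = n}
  one_mem' := ⟨one_mem_W n, rfl⟩
  mul_mem' ha hb := ⟨mul_mem_W ha.1 hb.1, by rw [Perm.mul_apply, hb.2, ha.2]⟩
  inv_mem' ha := ⟨inv_mem_W ha.1, Perm.inv_eq_iff_eq.2 ha.2.symm⟩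

lemma WJ_subset_posPreservingSubgroup (n : ℕ) : WJ n ⊆ posPreservingSubgroup n := by
  refine Subgroup.closure_le (K := posPreservingSubgroup n) |>.2 ?_
  rintro _ ⟨i, hi1, hi2, rfl⟩
  refine ⟨s_mem_W (by omega) (by omega), fun k hk => ?_⟩
  rw [s_apply_of_pos (by omega) hk]
  split_ifs <;> omega

lemma WK_subset_fixingNSubgroup {n : ℕ} (hn : 2 ≤ n) : WK n ⊆ fixingNSubgroup n := by
  refine Subgroup.closure_le (K := fixingNSubgroup n) |>.2 ?_
  rintro _ (rfl | ⟨i, hi1, hi2, rfl⟩)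
  · refine ⟨t_mem_W (by omega), ?_⟩
    rw [t_apply, if_neg (by omega), if_neg (by omega)]
  · refine ⟨s_mem_W (by omega) (by omega), ?_⟩
    rw [s_apply_of_pos (by omega) (by omega)]
    split_ifs <;> omega

lemma s_mem_WJ {n : ℕ} {i : ℤ} (h1 : 1 ≤ i) (h2 : i ≤ n - 1) : s i ∈ WJ n :=
  Subgroup.subset_closure ⟨i.toNat, by omega, by omega, by rw [Int.toNat_of_nonneg (by omega)]⟩

lemma s_mem_WK {n : ℕ} {i : ℤ} (h1 : 1 ≤ i) (h2 : i ≤ n - 2) : s i ∈ WK n :=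
  Subgroup.subset_closure <|
    .inr ⟨i.toNat, by omega, by omega, by rw [Int.toNat_of_nonneg (by omega)]⟩

lemma t_mem_WK {n : ℕ} : t ∈ WK n := Subgroup.subset_closure (.inl rfl)

lemma mem_W_of_mul_mem_W {n : ℕ} {x u : Perm ℤ} (hxu : x * u ∈ W n) (hu : u ∈ W n) : x ∈ W n := by
  simpa using mul_mem_W hxu (inv_mem_W hu)

lemma inv_mul_mem_of_reflTransGen {G : Type*} [Group G] {H : Subgroup G} {r : G → G → Prop}
    (hr : ∀ a b, r a b → a⁻¹ * b ∈ H) {y w : G} (h : Relation.ReflTransGen r y w) :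
    y⁻¹ * w ∈ H := by
  induction h with
  | refl => simp
  | tail _ hab ih => simpa [mul_assoc] using H.mul_mem ih (hr _ _ hab)

lemma inv_mul_mem_of_mul_inv_mul_mem {G : Type*} [Group G] {H : Subgroup G} {x u x' u' : G}
    (h : (x * u)⁻¹ * (x' * u') ∈ H) (hu : u ∈ H) (hu' : u' ∈ H) : x⁻¹ * x' ∈ H := by
  convert H.mul_mem (H.mul_mem hu h) (H.inv_mem hu') using 1
  group

lemma forall_len_le_mul_of_forall_len_le_mul {H : Subgroup (Perm ℤ)} {n : ℕ} {x u : Perm ℤ}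
    (hu : u ∈ H) (hmin : ∀ v ∈ H, len n x ≤ len n (x * u * v)) :
    ∀ v ∈ H, len n x ≤ len n (x * v) := fun v hv => by
  simpa [mul_assoc] using hmin _ (H.mul_mem (H.inv_mem hu) hv)

lemma inv_mul_mem_WJ_of_knuth {n : ℕ} {a b : Perm ℤ} (h : stepI n a b ∨ stepII n a b) :
    a⁻¹ * b ∈ WJ n := by
  rcases h with ⟨i, h1, h2, -, rfl⟩ | ⟨i, h1, h2, -, rfl⟩ <;> rw [inv_mul_cancel_left] <;>
    exact s_mem_WJ (by omega) (by omega)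

lemma inv_mul_mem_WK_of_knuth {n : ℕ} {a b : Perm ℤ}
    (h : stepI (n - 1) a b ∨ stepII (n - 1) a b ∨ stepIII (n - 1) a b) : a⁻¹ * b ∈ WK n := by
  rcases h with ⟨i, h1, h2, -, rfl⟩ | ⟨i, h1, h2, -, rfl⟩ | ⟨i, h1, h2, -, rfl⟩ <;>
    rw [inv_mul_cancel_left] <;> exact s_mem_WK (by omega) (by omega)

lemma strictMonoOn_of_forall_len_le_mul_WJ {n : ℕ} (hn : 1 ≤ n) {x : Perm ℤ} (hx : x ∈ W n)
    (hmin : ∀ v ∈ WJ n, len n x ≤ len n (x * v)) : StrictMonoOn x (Icc 1 n) :=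
  strictMonoOn_of_lt_add_one ordConnected_Icc fun i _ hi hi1 =>
    apply_lt_apply_add_one_of_len_le hn hx hi.1 (by linarith [hi1.2])
      (hmin _ (s_mem_WJ hi.1 (by linarith [hi1.2])))

lemma strictMonoOn_of_forall_len_le_mul_WK {n : ℕ} (hn : 2 ≤ n) {x : Perm ℤ} (hx : x ∈ W n)
    (hmin : ∀ v ∈ WK n, len n x ≤ len n (x * v)) :
    StrictMonoOn x (Icc 1 (n - 1)) ∧ 0 < x 1 :=
  ⟨strictMonoOn_of_lt_add_one ordConnected_Icc fun i _ hi hi1 =>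
    apply_lt_apply_add_one_of_len_le (by omega) hx hi.1 (by linarith [hi1.2])
      (hmin _ (s_mem_WK hi.1 (by linarith [hi1.2]))),
    apply_one_pos_of_len_le (by omega) hx (hmin t t_mem_WK)⟩

lemma eq_one_of_mem_WJ_of_strictMonoOn {n : ℕ} {x v : Perm ℤ} (hv : v ∈ WJ n)
    (hx : StrictMonoOn x (Icc 1 n)) (hxv : StrictMonoOn (x * v) (Icc 1 n)) : v = 1 := by
  obtain ⟨hvW, hpos⟩ := WJ_subset_posPreservingSubgroup n hv
  have hmaps := mapsTo_Icc_of_mem_W hvW fun i hi => hpos i (by linarith [hi.1])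
  exact eq_one_of_eqOn_of_mem_W hvW
    (eqOn_id_of_strictMonoOn_of_mapsTo (strictMonoOn_of_comp hx hxv hmaps) hmaps)

lemma eq_one_of_mem_WK_of_strictMonoOn {n : ℕ} (hn : 2 ≤ n) {x v : Perm ℤ} (hxW : x ∈ W n)
    (hv : v ∈ WK n) (hx : StrictMonoOn x (Icc 1 (n - 1))) (hx1 : 0 < x 1)
    (hxv : StrictMonoOn (x * v) (Icc 1 (n - 1))) (hxv1 : 0 < (x * v) 1) : v = 1 := by
  obtain ⟨hvW, hvn⟩ := WK_subset_fixingNSubgroup hn hv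
  have hmaps : MapsTo v (Icc 1 (n - 1)) (Icc 1 (n - 1)) := fun i hi => by
    have habs := abs_apply_mem_Icc_of_mem_W hvW ⟨hi.1, by linarith [hi.2]⟩
    have hne : v i ≠ n := fun h => absurd (v.injective (h.trans hvn.symm)) (by linarith [hi.2])
    have hne' : v i ≠ -n := fun h => absurd (v.injective (h.trans (by rw [hvW.1, hvn])))
      (by linarith [hi.1])
    -- a negative `v i` would make `x (v i) = -x (-v i)` negative, but it is `(x * v) i > 0`
    have hpos : 0 < v i := lt_of_not_ge fun hle => by
      have hmem : -v i ∈ Icc 1 ((n : ℤ) - 1) := by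
        rw [abs_of_nonpos hle] at habs; exact ⟨habs.1, by have := habs.2; omega⟩
      have h1 := pos_of_strictMonoOn hx hx1 hmem
      have h2 := pos_of_strictMonoOn hxv hxv1 hi
      rw [hxW.1] at h1
      rw [Perm.mul_apply] at h2
      omega
    rw [abs_of_pos hpos] at habs
    exact ⟨habs.1, by have := habs.2; omega⟩
  have heq := eqOn_id_of_strictMonoOn_of_mapsTo (strictMonoOn_of_comp hx hxv hmaps) hmaps
  refine eq_one_of_eqOn_of_mem_W hvW fun i hi => ?_
  rcases hi.2.lt_or_eq with hlt | rfl
  · exact heq ⟨hi.1, by omega⟩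
  · exact hvn

theorem statement18 (n : ℕ) (hn : 2 ≤ n) (y w : Equiv.Perm ℤ)
    (hy : y ∈ W n) (hw : w ∈ W n) :
    (Relation.ReflTransGen (fun a b => stepI n a b ∨ stepII n a b) y w →
      ∀ x u x' u' : Equiv.Perm ℤ,
        u ∈ WJ n → y = x * u → len n y = len n x + len n u →
        (∀ v ∈ WJ n, len n x ≤ len n (y * v)) →
        u' ∈ WJ n → w = x' * u' → len n w = len n x' + len n u' →
        (∀ v ∈ WJ n, len n x' ≤ len n (w * v)) →
        x = x')
  ∧ (Relation.ReflTransGen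
        (fun a b => stepI (n - 1) a b ∨ stepII (n - 1) a b ∨ stepIII (n - 1) a b) y w →
      ∀ x u x' u' : Equiv.Perm ℤ,
        u ∈ WK n → y = x * u → len n y = len n x + len n u →
        (∀ v ∈ WK n, len n x ≤ len n (y * v)) →
        u' ∈ WK n → w = x' * u' → len n w = len n x' + len n u' →
        (∀ v ∈ WK n, len n x' ≤ len n (w * v)) →
        x = x') := by
  refine ⟨fun hknuth x u x' u' hu hyx _ hmin hu' hwx' _ hmin' => ?_,
    fun hknuth x u x' u' hu hyx _ hmin hu' hwx' _ hmin' => ?_⟩ <;> subst hyx hwx'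
  · have hv : x⁻¹ * x' ∈ WJ n := inv_mul_mem_of_mul_inv_mul_mem
      (inv_mul_mem_of_reflTransGen (fun _ _ => inv_mul_mem_WJ_of_knuth) hknuth) hu hu'
    have hx := strictMonoOn_of_forall_len_le_mul_WJ (by omega)
      (mem_W_of_mul_mem_W hy (WJ_subset_posPreservingSubgroup n hu).1)
      (forall_len_le_mul_of_forall_len_le_mul hu hmin)
    have hx' := strictMonoOn_of_forall_len_le_mul_WJ (by omega)
      (mem_W_of_mul_mem_W hw (WJ_subset_posPreservingSubgroup n hu').1)
      (forall_len_le_mul_of_forall_len_le_mul hu' hmin')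
    rw [← mul_inv_cancel_left x x', eq_one_of_mem_WJ_of_strictMonoOn hv hx
      (by rwa [mul_inv_cancel_left]), mul_one]
  · have hv : x⁻¹ * x' ∈ WK n := inv_mul_mem_of_mul_inv_mul_mem
      (inv_mul_mem_of_reflTransGen (fun _ _ => inv_mul_mem_WK_of_knuth) hknuth) hu hu'
    have hxW := mem_W_of_mul_mem_W hy (WK_subset_fixingNSubgroup hn hu).1
    obtain ⟨hx, hx1⟩ := strictMonoOn_of_forall_len_le_mul_WK hn hxW
      (forall_len_le_mul_of_forall_len_le_mul hu hmin)
    obtain ⟨hx', hx'1⟩ := strictMonoOn_of_forall_len_le_mul_WK hn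
      (mem_W_of_mul_mem_W hw (WK_subset_fixingNSubgroup hn hu').1)
      (forall_len_le_mul_of_forall_len_le_mul hu' hmin')
    rw [← mul_inv_cancel_left x x'] at hx' hx'1 ⊢
    rw [eq_one_of_mem_WK_of_strictMonoOn hn hxW hv hx hx1 hx' hx'1, mul_one]

end BnPaper
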